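/- Let n ≥ 1 and let e_1, …, e_n be the standard basis of ℂ^n. Consider the n² vectors consisting of: the n basis vectors e_k; the n(n−1)/2 vectors (e_k + e_l)/√2 for k < l; and the n(n−1)/2 vectors (e_k + i·e_l)/√2 for k < l. Then the ℂ-linear span of the n² rank-one projectors onto these vectors equals the space of all n×n complex matrices (i.e., these vectors form a minimal representative set). -/
import Mathlib


open Matrix

/-- The rank-one projector onto a vector `v ∈ ℂ^n`:
`(proj v) i j = v i * conj (v j)`. -/
noncomputable def proj {n : ℕ} (v : Fin n → ℂ) : Matrix (Fin n) (Fin n) ℂ :=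
  fun i j => v i * (starRingEnd ℂ) (v j)

/-- The `n² = n + n(n−1)/2 + n(n−1)/2` vectors of the minimal representative
set: the standard basis vectors `e k`, the vectors `(e k + e l)/√2` for
`k < l`, and the vectors `(e k + i·e l)/√2` for `k < l`. -/
noncomputable def stdVecs (n : ℕ) :
    Fin n ⊕ {q : Fin n × Fin n // q.1 < q.2} ⊕ {q : Fin n × Fin n // q.1 < q.2} →
      Fin n → ℂ :=
  fun idx =>
    match idx with
    | Sum.inl k => (Pi.single k 1 : Fin n → ℂ)
    | Sum.inr (Sum.inl q) =>
        ((Real.sqrt 2 : ℂ))⁻¹ •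
          ((Pi.single q.1.1 1 : Fin n → ℂ) + (Pi.single q.1.2 1 : Fin n → ℂ))
    | Sum.inr (Sum.inr q) =>
        ((Real.sqrt 2 : ℂ))⁻¹ •
          ((Pi.single q.1.1 1 : Fin n → ℂ) +
            Complex.I • (Pi.single q.1.2 1 : Fin n → ℂ))

lemma proj_smul' {n : ℕ} (a : ℂ) (v : Fin n → ℂ) :
    proj (a • v) = (a * (starRingEnd ℂ) a) • proj v := by
  ext i j
  simp [proj, mul_comm, mul_left_comm, mul_assoc]

lemma sqrt2_coef' : ((Real.sqrt 2 : ℂ))⁻¹ * (starRingEnd ℂ) ((Real.sqrt 2 : ℂ))⁻¹ = (2:ℂ)⁻¹ := by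
  rw [map_inv₀, Complex.conj_ofReal, ← mul_inv, ← Complex.ofReal_mul,
    Real.mul_self_sqrt (by norm_num)]
  norm_num

lemma proj_single' {n : ℕ} (k : Fin n) :
    proj (Pi.single k 1 : Fin n → ℂ) = Matrix.single k k (1:ℂ) := by
  ext i j
  by_cases hik : i = k <;> by_cases hjk : j = k <;>
    simp_all [proj, Pi.single_apply, Matrix.single, eq_comm]

lemma Ekl_eq' {n : ℕ} {k l : Fin n} (h : k ≠ l) :
    Matrix.single k l (1:ℂ) =
      (2:ℂ)⁻¹ • proj ((Pi.single k 1 : Fin n → ℂ) + Pi.single l 1)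
      + Complex.I • ((2:ℂ)⁻¹ •
          proj ((Pi.single k 1 : Fin n → ℂ) + Complex.I • (Pi.single l 1 : Fin n → ℂ)))
      - ((1 + Complex.I)/2) •
          (Matrix.single k k (1:ℂ) + Matrix.single l l (1:ℂ)) := by
  ext i j
  by_cases hik : i = k <;> by_cases hil : i = l <;> by_cases hjk : j = k <;>
      by_cases hjl : j = l <;>
    simp_all [proj, Pi.single_apply, Matrix.single, Complex.conj_I, eq_comm] <;>
    ring_nf <;> simp [Complex.I_sq] <;> ring

lemma Elk_eq' {n : ℕ} {k l : Fin n} (h : k ≠ l) :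
    Matrix.single l k (1:ℂ) =
      (2:ℂ)⁻¹ • proj ((Pi.single k 1 : Fin n → ℂ) + Pi.single l 1)
      - Complex.I • ((2:ℂ)⁻¹ •
          proj ((Pi.single k 1 : Fin n → ℂ) + Complex.I • (Pi.single l 1 : Fin n → ℂ)))
      - ((1 - Complex.I)/2) •
          (Matrix.single k k (1:ℂ) + Matrix.single l l (1:ℂ)) := by
  ext i j
  by_cases hik : i = k <;> by_cases hil : i = l <;> by_cases hjk : j = k <;>
      by_cases hjl : j = l <;>
    simp_all [proj, Pi.single_apply, Matrix.single, Complex.conj_I, eq_comm] <;>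
    ring_nf <;> simp [Complex.I_sq] <;> ring

/-- The `n²` rank-one projectors onto the vectors `e k`, `(e k + e l)/√2` and
`(e k + i·e l)/√2` (`k < l`) span the whole space of `n×n` complex matrices:
they form a minimal representative set. -/
theorem stmt17 {n : ℕ} (hn : 1 ≤ n) :
    Submodule.span ℂ (Set.range fun idx => proj (stdVecs n idx)) = ⊤ := by
  set S := Submodule.span ℂ (Set.range fun idx => proj (stdVecs n idx)) with hS
  have hmem : ∀ idx, proj (stdVecs n idx) ∈ S := fun idx =>
    Submodule.subset_span ⟨idx, rfl⟩
  have hdiag : ∀ k : Fin n, Matrix.single k k (1:ℂ) ∈ S := by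
    intro k
    have := hmem (Sum.inl k)
    simpa [stdVecs, proj_single'] using this
  have hsum : ∀ k l : Fin n, k < l →
      (2:ℂ)⁻¹ • proj ((Pi.single k 1 : Fin n → ℂ) + Pi.single l 1) ∈ S ∧
      (2:ℂ)⁻¹ •
        proj ((Pi.single k 1 : Fin n → ℂ) + Complex.I • (Pi.single l 1 : Fin n → ℂ)) ∈ S := by
    intro k l hkl
    constructor
    · have := hmem (Sum.inr (Sum.inl ⟨(k, l), hkl⟩))
      rw [stdVecs, proj_smul', sqrt2_coef'] at this
      exact this
    · have := hmem (Sum.inr (Sum.inr ⟨(k, l), hkl⟩))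
      rw [stdVecs, proj_smul', sqrt2_coef'] at this
      exact this
  have key : ∀ k l : Fin n, Matrix.single k l (1:ℂ) ∈ S := by
    intro k l
    rcases lt_trichotomy k l with h | h | h
    · obtain ⟨h1, h2⟩ := hsum k l h
      rw [Ekl_eq' h.ne]
      exact Submodule.sub_mem S (Submodule.add_mem S h1 (S.smul_mem _ h2))
        (S.smul_mem _ (Submodule.add_mem S (hdiag k) (hdiag l)))
    · subst h; exact hdiag k
    · obtain ⟨h1, h2⟩ := hsum l k h
      rw [Elk_eq' h.ne]
      exact Submodule.sub_mem S (Submodule.sub_mem S h1 (S.smul_mem _ h2))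
        (S.smul_mem _ (Submodule.add_mem S (hdiag l) (hdiag k)))
  rw [eq_top_iff]
  intro M _
  rw [Matrix.matrix_eq_sum_single M]
  refine Submodule.sum_mem S fun i _ => Submodule.sum_mem S fun j _ => ?_
  have hM : Matrix.single i j (M i j) = M i j • Matrix.single i j (1:ℂ) := by
    ext a b
    simp only [Matrix.single, Matrix.smul_apply, smul_eq_mul, Matrix.of_apply]
    split_ifs <;> simp
  rw [hM]
  exact S.smul_mem _ (key i j)
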